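/- arXiv:1204.3132 — 3 statements merged into one kernel-verified Lean document; each statement's English description precedes it below -/
import Mathlib

section
/- Define the observed-data posterior-draw variance estimator σ̂²_PD = σ²·U_obs/U_PD. If ν_PD > 2 then E[σ̂²_PD] − σ² = σ²·(2 − ν_prior)/(n_obs + ν_prior − 3). If moreover ν_PD > 4 then Var(σ̂²_PD) = 2σ⁴·(n_obs − 1)·(2n_obs + ν_prior − 4)/((n_obs + ν_prior − 5)·(n_obs + ν_prior − 3)²). -/
open MeasureTheory ProbabilityTheory NNReal Real

/-! Multiplying the `Γ(a, r)` density by `x ^ p` gives `Γ(a + p) / (Γ(a) r ^ p)` times the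
`Γ(a + p, r)` density, so every moment `E[U ^ p]` with `a + p > 0` of a gamma variable is a ratio
of Gamma values; for `U ~ χ²_k` this gives `E U = k`, `E U² = k (k + 2)`, `E U⁻¹ = 1 / (k - 2)` and
`E U⁻² = 1 / ((k - 2) (k - 4))`. Independence factors the first two moments of `U_obs / U_PD`,
giving mean `σ² ν_obs / (ν_PD - 2)` and variance
`2 σ⁴ ν_obs (ν_obs + ν_PD - 2) / ((ν_PD - 2)² (ν_PD - 4))`. -/

namespace ProbabilityTheory

variable {a r k : ℝ}

lemma integrable_gammaMeasure_iff (ha : 0 < a) (hr : 0 < r) {f : ℝ → ℝ} :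
    Integrable f (gammaMeasure a r) ↔ Integrable (fun x ↦ gammaPDFReal a r x * f x) := by
  rw [gammaMeasure, integrable_withDensity_iff_integrable_smul' (f := gammaPDF a r)
    (measurable_gammaPDFReal a r).ennreal_ofReal (ae_of_all _ fun _ ↦ ENNReal.ofReal_lt_top)]
  simp [gammaPDF, ENNReal.toReal_ofReal (gammaPDFReal_nonneg ha hr _)]

lemma integral_gammaMeasure (ha : 0 < a) (hr : 0 < r) (f : ℝ → ℝ) :
    ∫ x, f x ∂gammaMeasure a r = ∫ x, gammaPDFReal a r x * f x := by
  rw [gammaMeasure, integral_withDensity_eq_integral_toReal_smul (f := gammaPDF a r)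
    (measurable_gammaPDFReal a r).ennreal_ofReal (ae_of_all _ fun _ ↦ ENNReal.ofReal_lt_top)]
  simp [gammaPDF, ENNReal.toReal_ofReal (gammaPDFReal_nonneg ha hr _)]

lemma integrable_gammaPDFReal (ha : 0 < a) (hr : 0 < r) : Integrable (gammaPDFReal a r) := by
  have := isProbabilityMeasure_gammaMeasure ha hr
  simpa using (integrable_gammaMeasure_iff ha hr).1 (integrable_const (1 : ℝ))

lemma integral_gammaPDFReal (ha : 0 < a) (hr : 0 < r) : ∫ x, gammaPDFReal a r x = 1 := by
  have := isProbabilityMeasure_gammaMeasure ha hr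
  simpa using (integral_gammaMeasure ha hr fun _ ↦ 1).symm

lemma gammaPDFReal_mul_rpow {p x : ℝ} (hr : 0 < r) (hap : 0 < a + p) (hx : x ≠ 0) :
    gammaPDFReal a r x * x ^ p
      = Gamma (a + p) / (Gamma a * r ^ p) * gammaPDFReal (a + p) r x := by
  obtain hx | hx := hx.lt_or_gt
  · simp [gammaPDFReal, hx.not_ge]
  · simp only [gammaPDFReal, if_pos hx.le]
    rw [show a + p - 1 = a - 1 + p by ring, rpow_add hx, rpow_add hr]
    field_simp [(Gamma_pos_of_pos hap).ne']

lemma gammaPDFReal_mul_rpow_ae {p : ℝ} (hr : 0 < r) (hap : 0 < a + p) :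
    (fun x ↦ gammaPDFReal a r x * x ^ p)
      =ᵐ[volume] fun x ↦ Gamma (a + p) / (Gamma a * r ^ p) * gammaPDFReal (a + p) r x := by
  filter_upwards [Measure.ae_ne volume 0] with x hx using gammaPDFReal_mul_rpow hr hap hx

lemma integrable_rpow_gammaMeasure {p : ℝ} (ha : 0 < a) (hr : 0 < r) (hap : 0 < a + p) :
    Integrable (fun x ↦ x ^ p) (gammaMeasure a r) := by
  rw [integrable_gammaMeasure_iff ha hr, integrable_congr (gammaPDFReal_mul_rpow_ae hr hap)]
  exact (integrable_gammaPDFReal hap hr).const_mul _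

lemma integral_rpow_gammaMeasure {p : ℝ} (ha : 0 < a) (hr : 0 < r) (hap : 0 < a + p) :
    ∫ x, x ^ p ∂gammaMeasure a r = Gamma (a + p) / (Gamma a * r ^ p) := by
  rw [integral_gammaMeasure ha hr, integral_congr_ae (gammaPDFReal_mul_rpow_ae hr hap),
    integral_const_mul, integral_gammaPDFReal hap hr, mul_one]

noncomputable def chiSquared (k : ℝ) : Measure ℝ := gammaMeasure (k / 2) (1 / 2)

lemma integrable_zpow_chiSquared {n : ℤ} (hk : 0 < k) (hkn : 0 < k / 2 + n) :
    Integrable (fun x ↦ x ^ n) (chiSquared k) := by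
  rw [chiSquared]
  simpa only [Real.rpow_intCast] using
    integrable_rpow_gammaMeasure (p := n) (half_pos hk) one_half_pos hkn

lemma integral_zpow_chiSquared {n : ℤ} (hk : 0 < k) (hkn : 0 < k / 2 + n) :
    ∫ x, x ^ n ∂chiSquared k = 2 ^ n * Gamma (k / 2 + n) / Gamma (k / 2) := by
  have h := integral_rpow_gammaMeasure (p := n) (half_pos hk) one_half_pos hkn
  simp only [Real.rpow_intCast] at h
  rw [chiSquared, h, one_div_zpow]
  field_simp

lemma integral_id_chiSquared (hk : 0 < k) : ∫ x, x ∂chiSquared k = k := by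
  have h := integral_zpow_chiSquared (n := 1) hk (by positivity)
  simp only [zpow_one, Int.cast_one] at h
  rw [h, Gamma_add_one (by positivity)]
  field_simp [(Gamma_pos_of_pos (half_pos hk)).ne']

lemma integral_sq_chiSquared (hk : 0 < k) : ∫ x, x ^ 2 ∂chiSquared k = k * (k + 2) := by
  have h := integral_zpow_chiSquared (n := 2) hk (by positivity)
  simp only [zpow_ofNat, Int.cast_ofNat] at h
  rw [h, show k / 2 + 2 = k / 2 + 1 + 1 by ring, Gamma_add_one (by positivity),
    Gamma_add_one (by positivity)]
  field_simp [(Gamma_pos_of_pos (half_pos hk)).ne']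

lemma integral_inv_chiSquared (hk : 2 < k) : ∫ x, x⁻¹ ∂chiSquared k = (k - 2)⁻¹ := by
  have h := integral_zpow_chiSquared (n := -1) (by linarith) (by push_cast; linarith)
  simp only [zpow_neg_one, Int.cast_neg, Int.cast_one, ← sub_eq_add_neg] at h
  have hG := Gamma_add_one (s := k / 2 - 1) (by linarith)
  rw [sub_add_cancel] at hG
  rw [h, hG, mul_div_mul_right _ _ (Gamma_pos_of_pos (by linarith)).ne']
  have : k - 2 ≠ 0 := by linarith
  field_simp

lemma integral_inv_sq_chiSquared (hk : 4 < k) :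
    ∫ x, (x ^ 2)⁻¹ ∂chiSquared k = ((k - 2) * (k - 4))⁻¹ := by
  have h := integral_zpow_chiSquared (n := -2) (by linarith) (by push_cast; linarith)
  simp only [zpow_neg, zpow_ofNat, Int.cast_neg, Int.cast_ofNat, ← sub_eq_add_neg] at h
  have hG₁ := Gamma_add_one (s := k / 2 - 1) (by linarith)
  have hG₂ := Gamma_add_one (s := k / 2 - 2) (by linarith)
  rw [sub_add_cancel] at hG₁
  rw [show k / 2 - 2 + 1 = k / 2 - 1 by ring] at hG₂
  rw [h, hG₁, hG₂, ← mul_assoc, mul_div_mul_right _ _ (Gamma_pos_of_pos (by linarith)).ne',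
    show (k / 2 - 1) * (k / 2 - 2) = (k - 2) * (k - 4) / 2 ^ 2 by ring, div_div_eq_mul_div,
    inv_mul_cancel₀ (by norm_num), one_div]

section IndepRatio

variable {Ω : Type*} [MeasurableSpace Ω] {P : Measure Ω} {U V : Ω → ℝ} {m : ℝ}

lemma HasLaw.integrable_fun_comp {𝓧 : Type*} [MeasurableSpace 𝓧]
    {μ : Measure 𝓧} {X : Ω → 𝓧} (hX : HasLaw X μ P) {f : 𝓧 → ℝ} (hf : Integrable f μ) :
    Integrable (fun ω ↦ f (X ω)) P := by
  rw [← hX.map_eq] at hf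
  exact (integrable_map_measure hf.aestronglyMeasurable hX.aemeasurable).1 hf

lemma integral_mul_div_of_indepFun_chiSquared (hU : HasLaw U (chiSquared k) P)
    (hV : HasLaw V (chiSquared m) P) (hUV : IndepFun U V P) (hk : 0 < k) (hm : 2 < m) (c : ℝ) :
    ∫ ω, c * U ω / V ω ∂P = c * k / (m - 2) := by
  have hU₁ : ∫ ω, U ω ∂P = k :=
    (hU.integral_comp aestronglyMeasurable_id).trans (integral_id_chiSquared hk)
  have hV₁ : ∫ ω, (V ω)⁻¹ ∂P = (m - 2)⁻¹ :=
    (hV.integral_comp measurable_inv.aestronglyMeasurable).trans (integral_inv_chiSquared hm)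
  calc ∫ ω, c * U ω / V ω ∂P = c * ∫ ω, U ω * (V ω)⁻¹ ∂P := by
        simp_rw [mul_div_assoc, div_eq_mul_inv]; exact integral_const_mul _ _
    _ = c * k / (m - 2) := by
        have hUV' : IndepFun U (fun ω ↦ (V ω)⁻¹) P := hUV.comp measurable_id measurable_inv
        rw [hUV'.integral_fun_mul_eq_mul_integral hU.aemeasurable.aestronglyMeasurable
          hV.aemeasurable.inv.aestronglyMeasurable, hU₁, hV₁, div_eq_mul_inv, mul_assoc]

lemma memLp_two_mul_div_of_indepFun_chiSquared (hU : HasLaw U (chiSquared k) P)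
    (hV : HasLaw V (chiSquared m) P) (hUV : IndepFun U V P) (hk : 0 < k) (hm : 4 < m) (c : ℝ) :
    MemLp (fun ω ↦ c * U ω / V ω) 2 P := by
  have hsq : (fun ω ↦ (c * U ω / V ω) ^ 2) = fun ω ↦ c ^ 2 * (U ω ^ 2 * (V ω ^ 2)⁻¹) := by
    ext ω; ring
  have hUV' : IndepFun (fun ω ↦ U ω ^ 2) (fun ω ↦ (V ω ^ 2)⁻¹) P :=
    hUV.comp (measurable_id.pow_const 2) (measurable_id.pow_const 2).inv
  refine (memLp_two_iff_integrable_sq (f := fun ω ↦ c * U ω / V ω)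
    ((hU.aemeasurable.const_mul c).div hV.aemeasurable).aestronglyMeasurable).2 ?_
  rw [hsq]
  refine (hUV'.integrable_mul ?_ ?_).const_mul _
  · simpa using hU.integrable_fun_comp (integrable_zpow_chiSquared (n := 2) hk (by positivity))
  · simpa using hV.integrable_fun_comp
      (integrable_zpow_chiSquared (n := -2) (by linarith) (by push_cast; linarith))

lemma integral_sq_mul_div_of_indepFun_chiSquared (hU : HasLaw U (chiSquared k) P)
    (hV : HasLaw V (chiSquared m) P) (hUV : IndepFun U V P) (hk : 0 < k) (hm : 4 < m) (c : ℝ) :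
    ∫ ω, (c * U ω / V ω) ^ 2 ∂P = c ^ 2 * (k * (k + 2) / ((m - 2) * (m - 4))) := by
  have hU₂ : ∫ ω, U ω ^ 2 ∂P = k * (k + 2) :=
    (hU.integral_comp (measurable_id.pow_const 2).aestronglyMeasurable).trans
      (integral_sq_chiSquared hk)
  have hV₂ : ∫ ω, (V ω ^ 2)⁻¹ ∂P = ((m - 2) * (m - 4))⁻¹ :=
    (hV.integral_comp (measurable_id.pow_const 2).inv.aestronglyMeasurable).trans
      (integral_inv_sq_chiSquared hm)
  have hUV' : IndepFun (fun ω ↦ U ω ^ 2) (fun ω ↦ (V ω ^ 2)⁻¹) P :=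
    hUV.comp (measurable_id.pow_const 2) (measurable_id.pow_const 2).inv
  calc ∫ ω, (c * U ω / V ω) ^ 2 ∂P = c ^ 2 * ∫ ω, U ω ^ 2 * (V ω ^ 2)⁻¹ ∂P := by
        rw [← integral_const_mul]; congr 1 with ω; ring
    _ = c ^ 2 * (k * (k + 2) / ((m - 2) * (m - 4))) := by
        rw [hUV'.integral_fun_mul_eq_mul_integral (hU.aemeasurable.pow_const 2).aestronglyMeasurable
          (hV.aemeasurable.pow_const 2).inv.aestronglyMeasurable, hU₂, hV₂, div_eq_mul_inv]

lemma variance_mul_div_of_indepFun_chiSquared (hU : HasLaw U (chiSquared k) P)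
    (hV : HasLaw V (chiSquared m) P) (hUV : IndepFun U V P) (hk : 0 < k) (hm : 4 < m) (c : ℝ) :
    Var[fun ω ↦ c * U ω / V ω; P] = 2 * c ^ 2 * k * (k + m - 2) / ((m - 2) ^ 2 * (m - 4)) := by
  have : IsProbabilityMeasure P :=
    hU.isProbabilityMeasure_iff.2 (isProbabilityMeasure_gammaMeasure (half_pos hk) one_half_pos)
  rw [variance_eq_sub (memLp_two_mul_div_of_indepFun_chiSquared hU hV hUV hk hm c)]
  simp only [Pi.pow_apply]
  rw [integral_sq_mul_div_of_indepFun_chiSquared hU hV hUV hk hm c,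
    integral_mul_div_of_indepFun_chiSquared hU hV hUV hk (by linarith) c]
  have : m - 2 ≠ 0 := by linarith
  have : m - 4 ≠ 0 := by linarith
  field_simp
  ring

end IndepRatio

end ProbabilityTheory

theorem stmt2_general
    {Ω : Type*} [MeasurableSpace Ω] (P : Measure Ω)
    (σ : ℝ)
    (n_obs : ℕ) (hn : 2 ≤ n_obs)
    (ν_prior : ℝ)
    (U_obs Z_obs U_PD Z_PD : Ω → ℝ)
    (hUmeas : Measurable U_obs)
    (hUPDmeas : Measurable U_PD)
    (hU : P.map U_obs = gammaMeasure (((n_obs : ℝ) - 1) / 2) (1 / 2))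
    (hUPD : P.map U_PD = gammaMeasure (((n_obs : ℝ) - 1 + ν_prior) / 2) (1 / 2))
    (hindep : iIndepFun ![U_obs, Z_obs, U_PD, Z_PD] P) :
    ((n_obs : ℝ) - 1 + ν_prior > 2 →
      (∫ ω, σ ^ 2 * U_obs ω / U_PD ω ∂P) - σ ^ 2
        = σ ^ 2 * (2 - ν_prior) / ((n_obs : ℝ) + ν_prior - 3))
    ∧ ((n_obs : ℝ) - 1 + ν_prior > 4 →
      variance (fun ω => σ ^ 2 * U_obs ω / U_PD ω) P
        = 2 * σ ^ 4 * ((n_obs : ℝ) - 1) * (2 * (n_obs : ℝ) + ν_prior - 4)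
            / (((n_obs : ℝ) + ν_prior - 5) * ((n_obs : ℝ) + ν_prior - 3) ^ 2)) := by
  have hk : 0 < (n_obs : ℝ) - 1 := by
    have : (2 : ℝ) ≤ n_obs := by exact_mod_cast hn
    linarith
  have hUlaw : HasLaw U_obs (chiSquared ((n_obs : ℝ) - 1)) P := ⟨hUmeas.aemeasurable, hU⟩
  have hVlaw : HasLaw U_PD (chiSquared ((n_obs : ℝ) - 1 + ν_prior)) P :=
    ⟨hUPDmeas.aemeasurable, hUPD⟩
  have hUV : IndepFun U_obs U_PD P := by
    simpa using hindep.indepFun (i := 0) (j := 2) (by decide)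
  have h₂ : (n_obs : ℝ) - 1 + ν_prior - 2 = n_obs + ν_prior - 3 := by ring
  have h₄ : (n_obs : ℝ) - 1 + ν_prior - 4 = n_obs + ν_prior - 5 := by ring
  refine ⟨fun hm ↦ ?_, fun hm ↦ ?_⟩
  · have : (n_obs : ℝ) + ν_prior - 3 ≠ 0 := by linarith
    rw [integral_mul_div_of_indepFun_chiSquared hUlaw hVlaw hUV hk hm, h₂]
    field_simp
    ring
  · have : (n_obs : ℝ) + ν_prior - 3 ≠ 0 := by linarith
    have : (n_obs : ℝ) + ν_prior - 5 ≠ 0 := by linarith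
    rw [variance_mul_div_of_indepFun_chiSquared hUlaw hVlaw hUV hk hm, h₂, h₄]
    field_simp
    ring

/-- bias and variance of the observed-data posterior-draw variance
estimator `σ̂²_PD = σ² · U_obs / U_PD`. -/
theorem stmt2
    {Ω : Type*} [MeasurableSpace Ω] (P : Measure Ω) [IsProbabilityMeasure P]
    (μ σ : ℝ) (hσ : 0 < σ)
    (n_obs : ℕ) (hn : 2 ≤ n_obs)
    (ν_prior : ℝ) (hνPD : 0 < (n_obs : ℝ) - 1 + ν_prior)
    (U_obs Z_obs U_PD Z_PD : Ω → ℝ)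
    (hUmeas : Measurable U_obs) (hZmeas : Measurable Z_obs)
    (hUPDmeas : Measurable U_PD) (hZPDmeas : Measurable Z_PD)
    (hU : P.map U_obs = gammaMeasure (((n_obs : ℝ) - 1) / 2) (1 / 2))
    (hZ : P.map Z_obs = gaussianReal 0 (1 / (n_obs : ℝ≥0)))
    (hUPD : P.map U_PD = gammaMeasure (((n_obs : ℝ) - 1 + ν_prior) / 2) (1 / 2))
    (hZPD : P.map Z_PD = gaussianReal 0 (1 / (n_obs : ℝ≥0)))
    (hindep : iIndepFun ![U_obs, Z_obs, U_PD, Z_PD] P) :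
    ((n_obs : ℝ) - 1 + ν_prior > 2 →
      (∫ ω, σ ^ 2 * U_obs ω / U_PD ω ∂P) - σ ^ 2
        = σ ^ 2 * (2 - ν_prior) / ((n_obs : ℝ) + ν_prior - 3))
    ∧ ((n_obs : ℝ) - 1 + ν_prior > 4 →
      variance (fun ω => σ ^ 2 * U_obs ω / U_PD ω) P
        = 2 * σ ^ 4 * ((n_obs : ℝ) - 1) * (2 * (n_obs : ℝ) + ν_prior - 4)
            / (((n_obs : ℝ) + ν_prior - 5) * ((n_obs : ℝ) + ν_prior - 3) ^ 2)) :=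
  stmt2_general P σ n_obs hn ν_prior U_obs Z_obs U_PD Z_PD hUmeas hUPDmeas hU hUPD hindep
end

section
/- If D ≥ 2, then with X̄ = (1/D)·Σ_{d=1}^D X_d, the between-imputation variance satisfies E[(1/(D − 1))·Σ_{d=1}^D (X_d − X̄)²] = Var(X_1) − Var(E[X_1 | σ(Y)]). In words: the between-imputation sample variance is an unbiased estimator of the variance of the single-imputation estimator minus the variance of the infinite-imputation estimator. -/
/-!
Given `Y`, the draws `X_d = f (Y, W_d)` are i.i.d. with mean `g Y`, where
`g y = ∫ f (y, w) dν(w)` and `ν` is the common law of the `W_d`. Independence of `Y` from the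
draws makes every expectation an iterated integral over `law Y ⊗ ν`, which gives
`E[X_1 | Y] = g Y`, `E[X_d²] = E[X_1²]` and, for `d ≠ e`, `E[X_d X_e] = E[(g Y)²]`.
For any family with constant second moments `S` and constant cross moments `C`, the expected
sample variance is `S - C`; here this is `E[X_1²] - E[(g Y)²]`, which equals
`Var X_1 - Var E[X_1 | Y]` because a conditional expectation has the same mean.
-/

open MeasureTheory ProbabilityTheory

noncomputable def sampleVariance {ι : Type*} [Fintype ι] (x : ι → ℝ) : ℝ :=
  1 / ((Fintype.card ι : ℝ) - 1) * ∑ i, (x i - 1 / (Fintype.card ι : ℝ) * ∑ j, x j) ^ 2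

section SampleVariance

variable {ι : Type*} [Fintype ι]

theorem sampleVariance_eq (x : ι → ℝ) :
    sampleVariance x = 1 / ((Fintype.card ι : ℝ) - 1) *
      (∑ i, x i ^ 2 - 1 / (Fintype.card ι : ℝ) * ∑ i, ∑ j, x i * x j) := by
  rw [sampleVariance, ← Finset.sum_mul_sum, ← sq]
  congr 1
  rcases (Fintype.card ι).eq_zero_or_pos with hn | hn
  · simp [Fintype.card_eq_zero_iff.mp hn]
  have hn' : (Fintype.card ι : ℝ) ≠ 0 := by positivity
  simp only [sub_sq, Finset.sum_add_distrib, Finset.sum_sub_distrib, Finset.sum_const,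
    Finset.card_univ, nsmul_eq_mul, ← Finset.sum_mul, ← Finset.mul_sum]
  field_simp
  ring

variable {Ω : Type*} [MeasurableSpace Ω] {P : Measure Ω}

theorem integral_sampleVariance (hι : 2 ≤ Fintype.card ι) {X : ι → Ω → ℝ}
    (hX : ∀ i, MemLp (X i) 2 P) {S C : ℝ} (hsq : ∀ i, ∫ ω, X i ω ^ 2 ∂P = S)
    (hcross : ∀ i j, i ≠ j → ∫ ω, X i ω * X j ω ∂P = C) :
    ∫ ω, sampleVariance (fun i => X i ω) ∂P = S - C := by
  have hmul : ∀ i j, Integrable (fun ω => X i ω * X j ω) P :=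
    fun i j => (hX i).integrable_mul (hX j)
  have hrow : ∀ i, ∑ j, ∫ ω, X i ω * X j ω ∂P = S + ((Fintype.card ι : ℝ) - 1) * C := by
    intro i
    classical
    rw [← Finset.add_sum_erase _ _ (Finset.mem_univ i),
      Finset.sum_congr rfl fun j hj => hcross i j (Finset.ne_of_mem_erase hj).symm]
    simp [← sq, hsq, Finset.card_erase_of_mem, Nat.cast_sub (by omega : 1 ≤ Fintype.card ι)]
  have hsum : ∫ ω, ∑ i, ∑ j, X i ω * X j ω ∂P
      = Fintype.card ι * (S + ((Fintype.card ι : ℝ) - 1) * C) := by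
    rw [integral_finsetSum _ fun i _ => integrable_finsetSum _ fun j _ => hmul i j]
    simp only [integral_finsetSum _ fun j _ => hmul _ j, hrow, Finset.sum_const,
      Finset.card_univ, nsmul_eq_mul]
  simp_rw [sampleVariance_eq]
  rw [integral_const_mul, integral_sub (integrable_finsetSum _ fun i _ => (hX i).integrable_sq)
    ((integrable_finsetSum _ fun i _ => integrable_finsetSum _ fun j _ => hmul i j).const_mul _),
    integral_const_mul, integral_finsetSum _ fun i _ => (hX i).integrable_sq, hsum]
  simp only [hsq, Finset.sum_const, Finset.card_univ, nsmul_eq_mul]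
  have hn : (Fintype.card ι : ℝ) - 1 ≠ 0 := by
    have : (2 : ℝ) ≤ Fintype.card ι := by exact_mod_cast hι
    linarith
  field_simp
  ring

end SampleVariance

theorem variance_sub_variance_condExp {Ω : Type*} {m mΩ : MeasurableSpace Ω} {P : Measure Ω}
    [IsProbabilityMeasure P] (hm : m ≤ mΩ) {X : Ω → ℝ} (hX : MemLp X 2 P) :
    variance X P - variance (P[X|m]) P = ∫ ω, X ω ^ 2 ∂P - ∫ ω, (P[X|m]) ω ^ 2 ∂P := by
  rw [variance_eq_sub hX, variance_eq_sub (hX.condExp one_le_two), integral_condExp hm]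
  simp only [Pi.pow_apply]
  ring

namespace ProbabilityTheory.IndepFun

variable {Ω E F : Type*} {mΩ : MeasurableSpace Ω} {mE : MeasurableSpace E} {mF : MeasurableSpace F}
  {P : Measure Ω} [IsFiniteMeasure P] {Y : Ω → E} {W : Ω → F} {f : E × F → ℝ}

theorem integrable_prod_map (hYW : IndepFun Y W P) (hY : Measurable Y) (hW : Measurable W)
    (hf : Measurable f) (hint : Integrable (fun ω => f (Y ω, W ω)) P) :
    Integrable f ((P.map Y).prod (P.map W)) := by
  rw [← (indepFun_iff_map_prod_eq_prod_map_map hY.aemeasurable hW.aemeasurable).mp hYW]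
  exact (integrable_map_measure hf.aestronglyMeasurable (hY.prodMk hW).aemeasurable).mpr hint

theorem integrable_integral_comp_prodMk (hYW : IndepFun Y W P) (hY : Measurable Y)
    (hW : Measurable W) (hf : Measurable f) (hint : Integrable (fun ω => f (Y ω, W ω)) P) :
    Integrable (fun ω => ∫ w, f (Y ω, w) ∂(P.map W)) P :=
  (integrable_map_measure hf.stronglyMeasurable.integral_prod_right'.aestronglyMeasurable
    hY.aemeasurable).mp (hYW.integrable_prod_map hY hW hf hint).integral_prod_left

theorem integral_comp_prodMk (hYW : IndepFun Y W P) (hY : Measurable Y) (hW : Measurable W)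
    (hf : Measurable f) (hint : Integrable (fun ω => f (Y ω, W ω)) P) :
    ∫ ω, f (Y ω, W ω) ∂P = ∫ ω, ∫ w, f (Y ω, w) ∂(P.map W) ∂P := by
  rw [← integral_map (hY.prodMk hW).aemeasurable hf.aestronglyMeasurable,
    (indepFun_iff_map_prod_eq_prod_map_map hY.aemeasurable hW.aemeasurable).mp hYW,
    integral_prod f (hYW.integrable_prod_map hY hW hf hint), integral_map hY.aemeasurable
      hf.stronglyMeasurable.integral_prod_right'.aestronglyMeasurable]

theorem condExp_comp_prodMk (hYW : IndepFun Y W P) (hY : Measurable Y) (hW : Measurable W)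
    (hf : Measurable f) (hint : Integrable (fun ω => f (Y ω, W ω)) P) :
    P[fun ω => f (Y ω, W ω) | MeasurableSpace.comap Y mE]
      =ᵐ[P] fun ω => ∫ w, f (Y ω, w) ∂(P.map W) := by
  refine (ae_eq_condExp_of_forall_setIntegral_eq hY.comap_le hint ?_ ?_ ?_).symm
  · exact fun _ _ _ => (hYW.integrable_integral_comp_prodMk hY hW hf hint).integrableOn
  · -- test against `Y ⁻¹' A` by integrating the indicator of `A ×ˢ univ`
    rintro s ⟨A, hA, rfl⟩ -
    have hAW : MeasurableSet (A ×ˢ (Set.univ : Set F)) := hA.prod MeasurableSet.univ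
    have hcomp : ∀ ω, (A ×ˢ Set.univ).indicator f (Y ω, W ω)
        = (Y ⁻¹' A).indicator (fun ω => f (Y ω, W ω)) ω := by
      intro ω
      by_cases hω : Y ω ∈ A <;> simp [Set.indicator, hω]
    have hsec : ∀ ω, ∫ w, (A ×ˢ Set.univ).indicator f (Y ω, w) ∂(P.map W)
        = (Y ⁻¹' A).indicator (fun ω => ∫ w, f (Y ω, w) ∂(P.map W)) ω := by
      intro ω
      by_cases hω : Y ω ∈ A <;> simp [Set.indicator, hω]
    have := hYW.integral_comp_prodMk hY hW (hf.indicator hAW)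
      (by simpa only [hcomp] using hint.indicator (hY hA))
    simp only [hcomp, hsec, integral_indicator (hY hA)] at this
    exact this.symm
  · exact ((hf.stronglyMeasurable.integral_prod_right' (ν := P.map W)).comp_measurable (comap_measurable Y)).aestronglyMeasurable

theorem integral_comp_prodMk_mul_comp_prodMk {W₁ W₂ : Ω → F}
    (hYW : IndepFun Y (fun ω => (W₁ ω, W₂ ω)) P) (hW : IndepFun W₁ W₂ P)
    (hlaw : P.map W₂ = P.map W₁) (hY : Measurable Y) (hW₁ : Measurable W₁)
    (hW₂ : Measurable W₂) (hf : Measurable f)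
    (hint : Integrable (fun ω => f (Y ω, W₁ ω) * f (Y ω, W₂ ω)) P) :
    ∫ ω, f (Y ω, W₁ ω) * f (Y ω, W₂ ω) ∂P = ∫ ω, (∫ w, f (Y ω, w) ∂(P.map W₁)) ^ 2 ∂P := by
  have hfW : Measurable fun p : E × F × F => f (p.1, p.2.1) * f (p.1, p.2.2) :=
    (hf.comp (measurable_fst.prodMk (measurable_fst.comp measurable_snd))).mul
      (hf.comp (measurable_fst.prodMk (measurable_snd.comp measurable_snd)))
  rw [hYW.integral_comp_prodMk hY (hW₁.prodMk hW₂) hfW hint,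
    (indepFun_iff_map_prod_eq_prod_map_map hW₁.aemeasurable hW₂.aemeasurable).mp hW, hlaw]
  simp_rw [sq]
  congr 1 with ω
  exact integral_prod_mul (fun w => f (Y ω, w)) (fun w => f (Y ω, w))

end ProbabilityTheory.IndepFun

/-- the between-imputation sample variance is an unbiased estimator of
the variance of the single-imputation estimator minus the variance of the
infinite-imputation estimator (the conditional expectation given the observed data). -/
theorem stmt16
    {Ω : Type*} [MeasurableSpace Ω] (P : Measure Ω) [IsProbabilityMeasure P]
    {E F : Type*} [MeasurableSpace E] [MeasurableSpace F]
    (Y : Ω → E) (hY : Measurable Y)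
    (D : ℕ) (hD : 2 ≤ D)
    (W : Fin D → Ω → F) (hWmeas : ∀ d, Measurable (W d))
    (hiid : ∀ d, P.map (W d) = P.map (W ⟨0, by omega⟩))
    (hWindep : iIndepFun W P)
    (hYW : IndepFun Y (fun ω d => W d ω) P)
    (f : E × F → ℝ) (hf : Measurable f)
    (hL2 : ∀ d, MemLp (fun ω => f (Y ω, W d ω)) 2 P) :
    (∫ ω, (1 / ((D : ℝ) - 1))
        * ∑ d, (f (Y ω, W d ω) - (1 / (D : ℝ)) * ∑ e, f (Y ω, W e ω)) ^ 2 ∂P)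
      = variance (fun ω => f (Y ω, W ⟨0, by omega⟩ ω)) P
        - variance (P[(fun ω => f (Y ω, W ⟨0, by omega⟩ ω)) | MeasurableSpace.comap Y inferInstance]) P := by
  set d₀ : Fin D := ⟨0, by omega⟩
  set g : Ω → ℝ := fun ω => ∫ w, f (Y ω, w) ∂(P.map (W d₀))
  have hYWd : ∀ d, IndepFun Y (W d) P := fun d => hYW.comp measurable_id (measurable_pi_apply d)
  have hsq : ∀ d, ∫ ω, f (Y ω, W d ω) ^ 2 ∂P = ∫ ω, f (Y ω, W d₀ ω) ^ 2 ∂P := fun d => by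
    rw [(hYWd d).integral_comp_prodMk (f := fun p => f p ^ 2) hY (hWmeas d) (hf.pow_const 2)
      (hL2 d).integrable_sq, (hYWd d₀).integral_comp_prodMk (f := fun p => f p ^ 2) hY
      (hWmeas d₀) (hf.pow_const 2) (hL2 d₀).integrable_sq, hiid d]
  have hcross : ∀ d e, d ≠ e → ∫ ω, f (Y ω, W d ω) * f (Y ω, W e ω) ∂P = ∫ ω, g ω ^ 2 ∂P :=
    fun d e hde => by
      have hYWde : IndepFun Y (fun ω => (W d ω, W e ω)) P :=
        hYW.comp measurable_id ((measurable_pi_apply d).prodMk (measurable_pi_apply e))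
      rw [hYWde.integral_comp_prodMk_mul_comp_prodMk (hWindep.indepFun hde)
        ((hiid e).trans (hiid d).symm) hY (hWmeas d) (hWmeas e) hf
        ((hL2 d).integrable_mul (hL2 e)), hiid d]
  have hcondExp_sq :
      ∫ ω, (P[fun ω => f (Y ω, W d₀ ω) | MeasurableSpace.comap Y inferInstance]) ω ^ 2 ∂P
        = ∫ ω, g ω ^ 2 ∂P :=
    integral_congr_ae (((hYWd d₀).condExp_comp_prodMk hY (hWmeas d₀) hf
      ((hL2 d₀).integrable one_le_two)).fun_comp (· ^ 2))
  rw [variance_sub_variance_condExp hY.comap_le (hL2 d₀), hcondExp_sq]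
  simpa only [sampleVariance, Fintype.card_fin] using
    integral_sampleVariance (by simpa using hD) hL2 hsq hcross
end

section
/- Let c be a real constant with ν_obs + c > 0 and define the D-fold multiple-imputation mean estimator under ML imputation μ̂_MI,M = μ + σ·(Z̄_obs + (n_mis/n)·√(U_obs/(ν_obs + c))·(1/D)·Σ_{d=1}^D Z̄_imp,d). Then E[μ̂_MI,M] = μ and Var(μ̂_MI,M) = σ²·(1/n_obs + n_mis·(n_obs − 1)/(D·n²·(c + n_obs − 1))). -/
open MeasureTheory ProbabilityTheory NNReal

/-!
Write the estimator as `μ + σ (Z̄_obs + κ W M)` with `κ = n_mis / n`,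
`W = √(U_obs / (ν_obs + c))` and `M` the average of the `Z̄_imp,d`. Mutual independence gives
`W ⟂ M` and `Z̄_obs ⟂ W M`, and `E M = 0` kills every cross term: the mean is `μ` and the
variance is `σ² (Var Z̄_obs + κ² E[W²] Var M)`, where `E[W²] = E[U_obs] / (ν_obs + c)`. The
chi-squared mean `E[U_obs] = ν_obs` comes from the density identity
`x · f_{Γ(a, r)}(x) = (a / r) · f_{Γ(a + 1, r)}(x)`.
-/

namespace ProbabilityTheory

section Gamma

lemma measurable_gammaPDF (a r : ℝ) : Measurable (gammaPDF a r) :=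
  (measurable_gammaPDFReal a r).ennreal_ofReal

lemma mul_gammaPDFReal {a r : ℝ} (ha : 0 < a) (hr : 0 < r) (x : ℝ) :
    gammaPDFReal a r x * x = a / r * gammaPDFReal (a + 1) r x := by
  unfold gammaPDFReal
  split_ifs with hx
  · have hpow : x ^ (a - 1) * x = x ^ a := by
      rcases hx.eq_or_lt with rfl | hx
      · simp [Real.zero_rpow ha.ne']
      · rw [Real.rpow_sub_one hx.ne', div_mul_cancel₀ _ hx.ne']
    rw [add_sub_cancel_right, Real.Gamma_add_one ha.ne', Real.rpow_add_one hr.ne', ← hpow]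
    field_simp
  · simp

lemma lintegral_ofReal_gammaMeasure {a r : ℝ} (ha : 0 < a) (hr : 0 < r) :
    ∫⁻ x, ENNReal.ofReal x ∂gammaMeasure a r = ENNReal.ofReal (a / r) := by
  have hpdf : ∀ x, gammaPDF a r x * ENNReal.ofReal x
      = ENNReal.ofReal (a / r) * gammaPDF (a + 1) r x := by
    intro x
    rcases le_or_gt 0 x with hx | hx
    · rw [gammaPDF, gammaPDF, ← ENNReal.ofReal_mul (gammaPDFReal_nonneg ha hr x),
        ← ENNReal.ofReal_mul (by positivity), mul_gammaPDFReal ha hr]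
    · simp [gammaPDF_of_neg hx]
  rw [gammaMeasure, lintegral_withDensity_eq_lintegral_mul _ (measurable_gammaPDF a r)
    (by fun_prop)]
  simp only [Pi.mul_apply, hpdf]
  rw [lintegral_const_mul _ (measurable_gammaPDF _ r), lintegral_gammaPDF_eq_one (by linarith) hr,
    mul_one]

lemma ae_nonneg_gammaMeasure (a r : ℝ) : ∀ᵐ x ∂gammaMeasure a r, 0 ≤ x := by
  rw [gammaMeasure, ae_withDensity_iff (measurable_gammaPDF a r)]
  exact ae_of_all _ fun x hx => not_lt.mp fun hneg => hx (gammaPDF_of_neg hneg)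

lemma integrable_id_gammaMeasure {a r : ℝ} (ha : 0 < a) (hr : 0 < r) :
    Integrable id (gammaMeasure a r) :=
  ⟨aestronglyMeasurable_id, (hasFiniteIntegral_iff_ofReal (ae_nonneg_gammaMeasure a r)).mpr
    (by simp [lintegral_ofReal_gammaMeasure ha hr])⟩

lemma integral_id_gammaMeasure {a r : ℝ} (ha : 0 < a) (hr : 0 < r) :
    ∫ x, x ∂gammaMeasure a r = a / r := by
  rw [integral_eq_lintegral_of_nonneg_ae (ae_nonneg_gammaMeasure a r) aestronglyMeasurable_id,
    lintegral_ofReal_gammaMeasure ha hr, ENNReal.toReal_ofReal (by positivity)]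

end Gamma

variable {Ω : Type*} [MeasurableSpace Ω] {P : Measure Ω}

section HasLaw

variable {E : Type*} [MeasurableSpace E] [NormedAddCommGroup E] [OpensMeasurableSpace E]
  [SecondCountableTopology E] {X : Ω → E} {μ : Measure E}

lemma HasLaw.memLp_iff (hX : HasLaw X μ P) {p : ENNReal} : MemLp X p P ↔ MemLp id p μ := by
  rw [← hX.map_eq, memLp_map_measure_iff (by rw [hX.map_eq]; exact aestronglyMeasurable_id)
    hX.aemeasurable, Function.id_comp]

lemma HasLaw.integrable_iff (hX : HasLaw X μ P) : Integrable X P ↔ Integrable id μ := by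
  simp only [← memLp_one_iff_integrable, hX.memLp_iff]

end HasLaw

lemma memLp_two_sqrt {f : Ω → ℝ} (hf : Integrable f P) : MemLp (fun ω => √(f ω)) 2 P := by
  rw [memLp_two_iff_integrable_sq (Real.continuous_sqrt.comp_aestronglyMeasurable hf.1)]
  simpa only [Real.sq_sqrt'] using hf.pos_part

lemma integral_sqrt_sq {f : Ω → ℝ} (hf : 0 ≤ᵐ[P] f) :
    ∫ ω, √(f ω) ^ 2 ∂P = ∫ ω, f ω ∂P :=
  integral_congr_ae (by filter_upwards [hf] with ω hω using Real.sq_sqrt hω)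

lemma HasLaw.memLp_gaussianReal {X : Ω → ℝ} {m : ℝ} {v : ℝ≥0}
    (hX : HasLaw X (gaussianReal m v) P) {p : ENNReal} (hp : p ≠ ⊤) : MemLp X p P :=
  hX.memLp_iff.mpr (memLp_id_gaussianReal' p hp)

lemma HasLaw.memLp_sqrt_div_gammaMeasure {U : Ω → ℝ} {a r : ℝ}
    (hU : HasLaw U (gammaMeasure a r) P) (ha : 0 < a) (hr : 0 < r) (k : ℝ) :
    MemLp (fun ω => √(U ω / k)) 2 P :=
  memLp_two_sqrt ((hU.integrable_iff.mpr (integrable_id_gammaMeasure ha hr)).div_const k)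

lemma HasLaw.integral_sqrt_div_sq_gammaMeasure {U : Ω → ℝ} {a r : ℝ}
    (hU : HasLaw U (gammaMeasure a r) P) (ha : 0 < a) (hr : 0 < r) {k : ℝ} (hk : 0 ≤ k) :
    ∫ ω, √(U ω / k) ^ 2 ∂P = a / r / k := by
  have hU0 : 0 ≤ᵐ[P] fun ω => U ω / k := by
    filter_upwards [(hU.ae_iff measurableSet_Ici.mem).mpr (ae_nonneg_gammaMeasure a r)]
      with ω hω using div_nonneg hω hk
  rw [integral_sqrt_sq hU0, integral_div, hU.integral_eq, integral_id_gammaMeasure ha hr]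

lemma iIndepFun.indepFun_of_dependsOn {ι β γ : Type*} [Fintype ι] [DecidableEq ι]
    [MeasurableSpace β] [MeasurableSpace γ] [Nonempty β] {f : ι → Ω → β}
    (h : iIndepFun f P) (hf : ∀ i, Measurable (f i)) {i : ι} {g : (ι → β) → γ}
    (hg : Measurable g) (hgi : DependsOn g {i}ᶜ) :
    f i ⟂ᵢ[P] fun ω => g (fun j => f j ω) := by
  obtain ⟨b⟩ := ‹Nonempty β›
  let extend : (({i}ᶜ : Finset ι) → β) → ι → β := fun x j =>
    if hj : j = i then b else x ⟨j, by simpa using hj⟩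
  have hextend : Measurable extend := by
    refine measurable_pi_lambda _ fun j => ?_
    by_cases hj : j = i
    · simp only [extend, hj, dite_true]; exact measurable_const
    · simp only [extend, hj, dite_false]; exact measurable_pi_apply _
  have hindep := (h.indepFun_finset {i} {i}ᶜ disjoint_compl_right hf).comp
    (measurable_pi_apply ⟨i, Finset.mem_singleton_self i⟩) (hg.comp hextend)
  refine hindep.congr (ae_of_all _ fun _ => rfl) (ae_of_all _ fun ω => hgi fun j hj => ?_)
  simp only [Set.mem_compl_iff, Set.mem_singleton_iff] at hj
  simp [extend, hj]

section FinCons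

variable {β : Type*} [MeasurableSpace β] [Nonempty β] {n : ℕ} {U Z : Ω → β}
  {Y : Fin n → Ω → β}

lemma iIndepFun.indepFun_comp_cons_cons {γ δ : Type*} [MeasurableSpace γ] [MeasurableSpace δ]
    (h : iIndepFun (Fin.cons U (Fin.cons Z Y) : Fin (n + 2) → Ω → β) P)
    (hm : ∀ i, Measurable ((Fin.cons U (Fin.cons Z Y) : Fin (n + 2) → Ω → β) i))
    {φ : β → γ} {g : (Fin n → β) → δ} (hφ : Measurable φ) (hg : Measurable g) :
    (fun ω => φ (U ω)) ⟂ᵢ[P] fun ω => g (fun d => Y d ω) :=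
  (h.indepFun_of_dependsOn hm (i := 0) (g := fun x => g fun d => x d.succ.succ)
    (by fun_prop) fun _ _ hxy => congrArg g (funext fun d => hxy _ (by simp))).comp
    hφ measurable_id

lemma iIndepFun.indepFun_cons_cons_mul
    (h : iIndepFun (Fin.cons U (Fin.cons Z Y) : Fin (n + 2) → Ω → β) P)
    (hm : ∀ i, Measurable ((Fin.cons U (Fin.cons Z Y) : Fin (n + 2) → Ω → β) i))
    {φ : β → ℝ} {g : (Fin n → β) → ℝ} (hφ : Measurable φ) (hg : Measurable g) :
    Z ⟂ᵢ[P] fun ω => φ (U ω) * g (fun d => Y d ω) := by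
  refine h.indepFun_of_dependsOn hm (i := 1) (g := fun x => φ (x 0) * g fun d => x d.succ.succ)
    (by fun_prop) fun x y hxy => ?_
  have h0 : x 0 = y 0 := hxy 0 (by simp)
  have hsucc : ∀ d : Fin n, x d.succ.succ = y d.succ.succ := fun d =>
    hxy _ fun h => Fin.succ_ne_zero d (Fin.succ_injective _ h)
  simp only [h0, hsucc]

end FinCons

lemma IndepFun.memLp_two_mul {X Y : Ω → ℝ} (hXY : X ⟂ᵢ[P] Y) (hX : MemLp X 2 P)
    (hY : MemLp Y 2 P) : MemLp (X * Y) 2 P := by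
  have hXY2 : (fun ω => X ω ^ 2) ⟂ᵢ[P] fun ω => Y ω ^ 2 :=
    hXY.comp (φ := fun x => x ^ 2) (ψ := fun x => x ^ 2) (by fun_prop) (by fun_prop)
  rw [memLp_two_iff_integrable_sq (hX.1.mul hY.1)]
  simpa only [Pi.mul_def, mul_pow] using hXY2.integrable_mul hX.integrable_sq hY.integrable_sq

lemma IndepFun.variance_mul_of_integral_eq_zero {X Y : Ω → ℝ}
    (hXY : X ⟂ᵢ[P] Y) (hX : AEStronglyMeasurable X P) (hY : AEStronglyMeasurable Y P)
    (hY0 : P[Y] = 0) :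
    Var[X * Y; P] = (∫ ω, X ω ^ 2 ∂P) * Var[Y; P] := by
  have hXY2 : (fun ω => X ω ^ 2) ⟂ᵢ[P] fun ω => Y ω ^ 2 :=
    hXY.comp (φ := fun x => x ^ 2) (ψ := fun x => x ^ 2) (by fun_prop) (by fun_prop)
  have hXY0 : P[X * Y] = 0 := by
    rw [hXY.integral_mul_eq_mul_integral hX hY, hY0, mul_zero]
  rw [variance_of_integral_eq_zero (hX.mul hY).aemeasurable hXY0,
    variance_of_integral_eq_zero hY.aemeasurable hY0]
  simpa only [Pi.mul_apply, mul_pow] using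
    hXY2.integral_fun_mul_eq_mul_integral (hX.pow 2) (hY.pow 2)

lemma iIndepFun.variance_average {ι : Type*} [Fintype ι] {X : ι → Ω → ℝ} {v : ℝ}
    (h : iIndepFun X P) (hX : ∀ i, MemLp (X i) 2 P) (hv : ∀ i, Var[X i; P] = v) :
    Var[fun ω => 1 / (Fintype.card ι : ℝ) * ∑ i, X i ω; P] = v / Fintype.card ι := by
  have hsum : Var[∑ i, X i; P] = Fintype.card ι * v := by
    rw [IndepFun.variance_sum (fun i _ => hX i) fun i _ j _ hij => h.indepFun hij]
    simp [hv]
  rw [variance_const_mul, ← Finset.sum_fn, hsum]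
  field_simp

lemma iIndepFun.moments_average_of_gaussianReal {ι : Type*} [Fintype ι] {X : ι → Ω → ℝ}
    {v : ℝ≥0} (h : iIndepFun X P) (hX : ∀ i, HasLaw (X i) (gaussianReal 0 v) P) :
    MemLp (fun ω => 1 / (Fintype.card ι : ℝ) * ∑ i, X i ω) 2 P
      ∧ ∫ ω, 1 / (Fintype.card ι : ℝ) * ∑ i, X i ω ∂P = 0
      ∧ Var[fun ω => 1 / (Fintype.card ι : ℝ) * ∑ i, X i ω; P] = v / Fintype.card ι := by
  have hX2 : ∀ i, MemLp (X i) 2 P := fun i => (hX i).memLp_gaussianReal (by simp)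
  refine ⟨(memLp_finsetSum _ fun i _ => hX2 i).const_mul _, ?_,
    h.variance_average hX2 fun i => (hX i).variance_eq.trans variance_id_gaussianReal⟩
  rw [integral_const_mul, integral_finsetSum _ fun i _ =>
    memLp_one_iff_integrable.mp ((hX i).memLp_gaussianReal (by simp))]
  simp [fun i => (hX i).integral_eq.trans integral_id_gaussianReal]

section Estimator

variable [IsProbabilityMeasure P] {Z W M : Ω → ℝ}

lemma integral_const_add_mul_add_mul_mul (μ σ κ : ℝ) (hZ : Integrable Z P)
    (hW : Integrable W P) (hM : Integrable M P) (hWM : W ⟂ᵢ[P] M) (hZ0 : P[Z] = 0)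
    (hM0 : P[M] = 0) :
    ∫ ω, μ + σ * (Z ω + κ * W ω * M ω) ∂P = μ := by
  have hWM0 : ∫ ω, W ω * M ω ∂P = 0 := by
    rw [hWM.integral_fun_mul_eq_mul_integral hW.1 hM.1, hM0, mul_zero]
  have hY : Integrable (fun ω => κ * W ω * M ω) P := by
    simpa only [Pi.mul_apply, mul_assoc] using (hWM.integrable_mul hW hM).const_mul κ
  have hZY : Integrable (fun ω => Z ω + κ * W ω * M ω) P := hZ.add hY
  rw [integral_add (integrable_const μ) (hZY.const_mul σ), integral_const_mul,
    integral_add hZ hY]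
  simp [mul_assoc, integral_const_mul, hZ0, hWM0]

lemma variance_const_add_mul_add_mul_mul (μ σ κ : ℝ) (hZ : MemLp Z 2 P)
    (hW : MemLp W 2 P) (hM : MemLp M 2 P) (hWM : W ⟂ᵢ[P] M)
    (hZWM : Z ⟂ᵢ[P] fun ω => W ω * M ω) (hM0 : P[M] = 0) :
    Var[fun ω => μ + σ * (Z ω + κ * W ω * M ω); P]
      = σ ^ 2 * (Var[Z; P] + κ ^ 2 * ((∫ ω, W ω ^ 2 ∂P) * Var[M; P])) := by
  have hY : MemLp (fun ω => κ * (W ω * M ω)) 2 P := (hWM.memLp_two_mul hW hM).const_mul κ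
  have hZY : Z ⟂ᵢ[P] fun ω => κ * (W ω * M ω) :=
    hZWM.comp (φ := id) (ψ := fun y => κ * y) measurable_id (by fun_prop)
  simp_rw [mul_assoc κ]
  have hX : AEStronglyMeasurable (fun ω => σ * (Z ω + κ * (W ω * M ω))) P :=
    (hZ.1.add hY.1).const_mul σ
  rw [variance_const_add hX μ, variance_const_mul, hZY.variance_fun_add hZ hY,
    variance_const_mul, ← hWM.variance_mul_of_integral_eq_zero hW.1 hM.1 hM0]
  rfl

end Estimator

end ProbabilityTheory

theorem stmt17_general
    {Ω : Type*} [MeasurableSpace Ω] (P : Measure Ω) [IsProbabilityMeasure P]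
    (μ σ : ℝ)
    (n_obs n_mis : ℕ) (hnobs : 2 ≤ n_obs)
    (D : ℕ)
    (U_obs Z_obs : Ω → ℝ) (Z_imp : Fin D → Ω → ℝ)
    (hUmeas : Measurable U_obs) (hZmeas : Measurable Z_obs)
    (hZimpmeas : ∀ d, Measurable (Z_imp d))
    (hU : P.map U_obs = gammaMeasure (((n_obs : ℝ) - 1) / 2) (1 / 2))
    (hZ : P.map Z_obs = gaussianReal 0 (1 / (n_obs : ℝ≥0)))
    (hZimp : ∀ d, P.map (Z_imp d) = gaussianReal 0 (1 / (n_mis : ℝ≥0)))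
    (hindep : iIndepFun
      (Fin.cons U_obs (Fin.cons Z_obs Z_imp) : Fin (D + 2) → Ω → ℝ) P)
    (c : ℝ) (hc : 0 < ((n_obs : ℝ) - 1) + c) :
    (∫ ω, μ + σ * (Z_obs ω
        + ((n_mis : ℝ) / ((n_obs : ℝ) + (n_mis : ℝ)))
            * Real.sqrt (U_obs ω / (((n_obs : ℝ) - 1) + c))
            * ((1 / (D : ℝ)) * ∑ d, Z_imp d ω)) ∂P) = μ
    ∧ variance (fun ω => μ + σ * (Z_obs ω
        + ((n_mis : ℝ) / ((n_obs : ℝ) + (n_mis : ℝ)))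
            * Real.sqrt (U_obs ω / (((n_obs : ℝ) - 1) + c))
            * ((1 / (D : ℝ)) * ∑ d, Z_imp d ω))) P
      = σ ^ 2 * (1 / (n_obs : ℝ)
          + (n_mis : ℝ) * ((n_obs : ℝ) - 1)
              / ((D : ℝ) * ((n_obs : ℝ) + (n_mis : ℝ)) ^ 2 * (c + (n_obs : ℝ) - 1))) := by
  have hν : 0 < ((n_obs : ℝ) - 1) / 2 := by
    have : (2 : ℝ) ≤ n_obs := by exact_mod_cast hnobs
    linarith
  have hF : ∀ i,
      Measurable ((Fin.cons U_obs (Fin.cons Z_obs Z_imp) : Fin (D + 2) → Ω → ℝ) i) :=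
    Fin.cases hUmeas (Fin.cases hZmeas hZimpmeas)
  have hUlaw : HasLaw U_obs _ P := ⟨hUmeas.aemeasurable, hU⟩
  have hZlaw : HasLaw Z_obs _ P := ⟨hZmeas.aemeasurable, hZ⟩
  have hZimpindep : iIndepFun Z_imp P :=
    hindep.precomp (g := fun d : Fin D => d.succ.succ)
      ((Fin.succ_injective _).comp (Fin.succ_injective _))
  obtain ⟨hM2, hEM, hVM⟩ := hZimpindep.moments_average_of_gaussianReal
    fun d => ⟨(hZimpmeas d).aemeasurable, hZimp d⟩
  simp only [Fintype.card_fin] at hM2 hEM hVM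
  have hZ2 := hZlaw.memLp_gaussianReal (p := 2) (by simp)
  have hW2 := hUlaw.memLp_sqrt_div_gammaMeasure hν one_half_pos (((n_obs : ℝ) - 1) + c)
  have hWM := hindep.indepFun_comp_cons_cons hF (φ := fun u => √(u / (((n_obs : ℝ) - 1) + c)))
    (g := fun z => 1 / (D : ℝ) * ∑ d, z d) (by fun_prop) (by fun_prop)
  have hZWM := hindep.indepFun_cons_cons_mul hF (φ := fun u => √(u / (((n_obs : ℝ) - 1) + c)))
    (g := fun z => 1 / (D : ℝ) * ∑ d, z d) (by fun_prop) (by fun_prop)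
  refine ⟨integral_const_add_mul_add_mul_mul μ σ _ (hZ2.integrable one_le_two)
    (hW2.integrable one_le_two) (hM2.integrable one_le_two) hWM
    (hZlaw.integral_eq.trans integral_id_gaussianReal) hEM,
    (variance_const_add_mul_add_mul_mul μ σ _ hZ2 hW2 hM2 hWM hZWM hEM).trans ?_⟩
  rw [hZlaw.variance_eq, variance_id_gaussianReal,
    hUlaw.integral_sqrt_div_sq_gammaMeasure hν one_half_pos hc.le, hVM]
  have hk : c + n_obs - 1 ≠ 0 := by linarith
  push_cast
  field_simp
  ring

/-- mean and variance of the D-fold multiple-imputation mean estimator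
under ML imputation. -/
theorem stmt17
    {Ω : Type*} [MeasurableSpace Ω] (P : Measure Ω) [IsProbabilityMeasure P]
    (μ σ : ℝ) (hσ : 0 < σ)
    (n_obs n_mis : ℕ) (hnobs : 2 ≤ n_obs) (hnmis : 2 ≤ n_mis)
    (D : ℕ) (hD : 1 ≤ D)
    (U_obs Z_obs : Ω → ℝ) (Z_imp : Fin D → Ω → ℝ)
    (hUmeas : Measurable U_obs) (hZmeas : Measurable Z_obs)
    (hZimpmeas : ∀ d, Measurable (Z_imp d))
    (hU : P.map U_obs = gammaMeasure (((n_obs : ℝ) - 1) / 2) (1 / 2))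
    (hZ : P.map Z_obs = gaussianReal 0 (1 / (n_obs : ℝ≥0)))
    (hZimp : ∀ d, P.map (Z_imp d) = gaussianReal 0 (1 / (n_mis : ℝ≥0)))
    (hindep : iIndepFun
      (Fin.cons U_obs (Fin.cons Z_obs Z_imp) : Fin (D + 2) → Ω → ℝ) P)
    (c : ℝ) (hc : 0 < ((n_obs : ℝ) - 1) + c) :
    (∫ ω, μ + σ * (Z_obs ω
        + ((n_mis : ℝ) / ((n_obs : ℝ) + (n_mis : ℝ)))
            * Real.sqrt (U_obs ω / (((n_obs : ℝ) - 1) + c))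
            * ((1 / (D : ℝ)) * ∑ d, Z_imp d ω)) ∂P) = μ
    ∧ variance (fun ω => μ + σ * (Z_obs ω
        + ((n_mis : ℝ) / ((n_obs : ℝ) + (n_mis : ℝ)))
            * Real.sqrt (U_obs ω / (((n_obs : ℝ) - 1) + c))
            * ((1 / (D : ℝ)) * ∑ d, Z_imp d ω))) P
      = σ ^ 2 * (1 / (n_obs : ℝ)
          + (n_mis : ℝ) * ((n_obs : ℝ) - 1)
              / ((D : ℝ) * ((n_obs : ℝ) + (n_mis : ℝ)) ^ 2 * (c + (n_obs : ℝ) - 1))) :=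
  stmt17_general P μ σ n_obs n_mis hnobs D U_obs Z_obs Z_imp hUmeas hZmeas hZimpmeas hU hZ hZimp
    hindep c hc
end
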